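/- With σ₀(κ) = (√(1+4κ) − 1)/2, the infimum ρ_* = inf_{κ>0} σ₀(κ)/c(κ) is attained at some κ_* > 0 and satisfies 0 < ρ_* < n; moreover, for every ρ with ρ_* < ρ < n there exist at least two distinct solutions 0 < κ₁ < κ₂ of the compatibility equation σ₀(κ) = ρ c(κ). -/

import Mathlib

/-!
Write `c = N / D`, where `N(κ)` and `D(κ)` integrate `x e^{κx}` and `e^{κx}` against
`sin^{n-2} θ dθ` with `x = cos θ`. The symmetry `θ ↦ π - θ` turns them into integrals of
`x sinh κx` and `cosh κx`, and the elementary bounds `κx² ≤ x sinh κx ≤ κ e^κ x²`,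
`cosh y - 1 ≤ y sinh y`, together with `∫ x² sin^{n-2} = (∫ sin^{n-2}) / n` (Wallis' recursion),
give `κ / (n + κ²) ≤ c(κ) ≤ κ e^κ / n`. Hence `F = σ₀ / c` satisfies
`F(κ) ≥ n / ((1 + κ) e^κ) → n` as `κ → 0⁺`, `F ≥ σ₀ → ∞` as `κ → ∞` (because `c ≤ 1`), and
`F(3/4) ≤ 2n/3 + 3/8 < n` since `σ₀(3/4) = 1/2`. A continuous function on `(0, ∞)` that dips below
its lower limits at both ends attains its minimum there, and each level strictly between the
minimum and those lower limits is taken on both sides of the minimizer.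
-/

open MeasureTheory Real Filter

/-- The order parameter `c(κ)` of the von Mises distribution in dimension `n`. -/
noncomputable def orderParam (n : ℕ) (κ : ℝ) : ℝ :=
  (∫ θ in (0:ℝ)..π, Real.cos θ * Real.exp (κ * Real.cos θ) * Real.sin θ ^ (n - 2)) /
  (∫ θ in (0:ℝ)..π, Real.exp (κ * Real.cos θ) * Real.sin θ ^ (n - 2))

/-- The inverse `σ₀` of `h(r) = r + r²`, arising from `ν(|J|) = |J|`, `τ(|J|) = 1/(1+|J|)`. -/
noncomputable def σ₀ (κ : ℝ) : ℝ := (Real.sqrt (1 + 4 * κ) - 1) / 2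


open Set Topology

namespace Real

theorem mul_sq_le_mul_sinh_mul {κ : ℝ} (hκ : 0 ≤ κ) (x : ℝ) : κ * x ^ 2 ≤ x * sinh (κ * x) := by
  rcases le_total 0 x with hx | hx
  · nlinarith [self_le_sinh_iff.2 (mul_nonneg hκ hx)]
  · nlinarith [sinh_le_self_iff.2 (mul_nonpos_of_nonneg_of_nonpos hκ hx)]

theorem sinh_le_mul_exp {y : ℝ} (hy : 0 ≤ y) : sinh y ≤ y * exp y := by
  have hinv : exp y * exp (-y) = 1 := by rw [← exp_add, add_neg_cancel, exp_zero]
  have hlow : 1 - y ≤ exp (-y) := by linarith [add_one_le_exp (-y)]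
  rw [sinh_eq]
  nlinarith [one_le_exp hy, mul_le_mul_of_nonneg_left hlow (exp_pos y).le]

theorem mul_sinh_mul_le {κ x : ℝ} (hκ : 0 ≤ κ) (hx : |x| ≤ 1) :
    x * sinh (κ * x) ≤ κ * exp κ * x ^ 2 := by
  wlog hx₀ : 0 ≤ x generalizing x
  · simpa [sinh_neg] using this (x := -x) (by rwa [abs_neg]) (by linarith)
  have hx₁ : x ≤ 1 := (le_abs_self x).trans hx
  have hexp : exp (κ * x) ≤ exp κ := exp_le_exp.2 (by nlinarith)
  have hsinh := sinh_le_mul_exp (mul_nonneg hκ hx₀)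
  have hbound : κ * x * exp (κ * x) ≤ κ * x * exp κ :=
    mul_le_mul_of_nonneg_left hexp (by positivity)
  nlinarith

theorem cosh_sub_one_le_mul_sinh (y : ℝ) : cosh y - 1 ≤ y * sinh y := by
  wlog hy : 0 ≤ y generalizing y
  · simpa [sinh_neg] using this (-y) (by linarith)
  have hinv : exp y * exp (-y) = 1 := by rw [← exp_add, add_neg_cancel, exp_zero]
  have hlow : 1 - y ≤ exp (-y) := by linarith [add_one_le_exp (-y)]
  have hdiff : 0 ≤ exp y - exp (-y) := by linarith [exp_le_exp.2 (by linarith : -y ≤ y)]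
  rw [cosh_eq, sinh_eq]
  nlinarith [mul_le_mul_of_nonneg_right hlow hdiff, sq_nonneg (exp (-y) - 1)]

end Real

/-- Up to a constant factor, the integral of `x ↦ f x₁` over the unit sphere of `ℝ^(m+2)`. -/
noncomputable def zonalIntegral (m : ℕ) (f : ℝ → ℝ) : ℝ :=
  ∫ θ in (0:ℝ)..π, f (cos θ) * sin θ ^ m

namespace zonalIntegral

variable (m : ℕ) {f g : ℝ → ℝ}

theorem comp_neg : zonalIntegral m (fun x => f (-x)) = zonalIntegral m f := by
  have h := intervalIntegral.integral_comp_sub_left (fun θ => f (cos θ) * sin θ ^ m) π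
    (a := 0) (b := π)
  simp only [cos_pi_sub, sin_pi_sub, sub_self, sub_zero] at h
  exact h

theorem add (hf : Continuous f) (hg : Continuous g) :
    zonalIntegral m (fun x => f x + g x) = zonalIntegral m f + zonalIntegral m g := by
  simp only [zonalIntegral, add_mul]
  exact intervalIntegral.integral_add (by apply Continuous.intervalIntegrable; fun_prop)
    (by apply Continuous.intervalIntegrable; fun_prop)

theorem const_mul (c : ℝ) :
    zonalIntegral m (fun x => c * f x) = c * zonalIntegral m f := by
  simp only [zonalIntegral, mul_assoc, intervalIntegral.integral_const_mul]

theorem mono (hf : Continuous f) (hg : Continuous g) (h : ∀ x ∈ Icc (-1) 1, f x ≤ g x) :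
    zonalIntegral m f ≤ zonalIntegral m g := by
  refine intervalIntegral.integral_mono_on pi_pos.le
    (by apply Continuous.intervalIntegrable; fun_prop)
    (by apply Continuous.intervalIntegrable; fun_prop) fun θ hθ => ?_
  exact mul_le_mul_of_nonneg_right (h _ ⟨neg_one_le_cos θ, cos_le_one θ⟩)
    (pow_nonneg (sin_nonneg_of_nonneg_of_le_pi hθ.1 hθ.2) m)

theorem eq_even_part (hf : Continuous f) :
    zonalIntegral m f = zonalIntegral m (fun x => (f x + f (-x)) / 2) := by
  simp only [div_eq_inv_mul]
  rw [const_mul, add m hf (by fun_prop), comp_neg]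
  ring

theorem one_pos : 0 < zonalIntegral m (fun _ => 1) := by
  simpa [zonalIntegral] using integral_sin_pow_pos (n := m)

theorem sq : zonalIntegral m (fun x => x ^ 2) = zonalIntegral m (fun _ => 1) / (m + 2) := by
  have hcos : ∀ θ, cos θ ^ 2 * sin θ ^ m = sin θ ^ m - sin θ ^ (m + 2) := fun θ => by
    rw [cos_sq']; ring
  have hred := integral_sin_pow (a := 0) (b := π) m
  simp only [sin_zero, sin_pi, zero_pow (Nat.succ_ne_zero _), zero_mul, sub_zero, zero_div,
    zero_add] at hred
  simp only [zonalIntegral, hcos, one_mul]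
  rw [intervalIntegral.integral_sub (by apply Continuous.intervalIntegrable; fun_prop)
    (by apply Continuous.intervalIntegrable; fun_prop), hred]
  field_simp
  ring

theorem continuous_param {f : ℝ → ℝ → ℝ} (hf : Continuous (Function.uncurry f)) :
    Continuous fun κ => zonalIntegral m (f κ) := by
  unfold zonalIntegral
  fun_prop

end zonalIntegral

noncomputable def vonMisesMass (m : ℕ) (κ : ℝ) : ℝ := zonalIntegral m fun x => exp (κ * x)

noncomputable def vonMisesMoment (m : ℕ) (κ : ℝ) : ℝ := zonalIntegral m fun x => x * exp (κ * x)

section vonMises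

variable (m : ℕ)

theorem vonMisesMass_eq_cosh (κ : ℝ) :
    vonMisesMass m κ = zonalIntegral m fun x => cosh (κ * x) := by
  rw [vonMisesMass, zonalIntegral.eq_even_part m (by fun_prop)]
  simp only [cosh_eq, mul_neg]

theorem vonMisesMoment_eq_sinh (κ : ℝ) :
    vonMisesMoment m κ = zonalIntegral m fun x => x * sinh (κ * x) := by
  rw [vonMisesMoment, zonalIntegral.eq_even_part m (by fun_prop)]
  congr 1 with x
  rw [sinh_eq, mul_neg]
  ring

theorem zonalIntegral_one_le_vonMisesMass (κ : ℝ) :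
    zonalIntegral m (fun _ => 1) ≤ vonMisesMass m κ := by
  rw [vonMisesMass_eq_cosh]
  exact zonalIntegral.mono m continuous_const (by fun_prop) fun x _ => one_le_cosh _

theorem vonMisesMass_pos (κ : ℝ) : 0 < vonMisesMass m κ :=
  (zonalIntegral.one_pos m).trans_le (zonalIntegral_one_le_vonMisesMass m κ)

theorem vonMisesMoment_le_vonMisesMass (κ : ℝ) : vonMisesMoment m κ ≤ vonMisesMass m κ :=
  zonalIntegral.mono m (by fun_prop) (by fun_prop) fun x hx =>
    mul_le_of_le_one_left (exp_pos _).le hx.2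

theorem mul_zonalIntegral_sq_le_vonMisesMoment {κ : ℝ} (hκ : 0 ≤ κ) :
    κ * zonalIntegral m (fun x => x ^ 2) ≤ vonMisesMoment m κ := by
  rw [← zonalIntegral.const_mul, vonMisesMoment_eq_sinh]
  exact zonalIntegral.mono m (by fun_prop) (by fun_prop) fun x _ => mul_sq_le_mul_sinh_mul hκ x

theorem vonMisesMoment_le {κ : ℝ} (hκ : 0 ≤ κ) :
    vonMisesMoment m κ ≤ κ * exp κ * zonalIntegral m (fun x => x ^ 2) := by
  rw [← zonalIntegral.const_mul, vonMisesMoment_eq_sinh]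
  exact zonalIntegral.mono m (by fun_prop) (by fun_prop) fun x hx =>
    mul_sinh_mul_le hκ (abs_le.2 hx)

theorem vonMisesMass_le (κ : ℝ) :
    vonMisesMass m κ ≤ zonalIntegral m (fun _ => 1) + κ * vonMisesMoment m κ := by
  rw [vonMisesMass_eq_cosh, vonMisesMoment_eq_sinh, ← zonalIntegral.const_mul,
    ← zonalIntegral.add m continuous_const (by fun_prop)]
  refine zonalIntegral.mono m (by fun_prop) (by fun_prop) fun x _ => ?_
  have hcosh := cosh_sub_one_le_mul_sinh (κ * x)
  linarith [show κ * x * sinh (κ * x) = κ * (x * sinh (κ * x)) by ring]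

theorem continuous_vonMisesMass : Continuous (vonMisesMass m) :=
  zonalIntegral.continuous_param m (f := fun κ x => exp (κ * x)) (by fun_prop)

theorem continuous_vonMisesMoment : Continuous (vonMisesMoment m) :=
  zonalIntegral.continuous_param m (f := fun κ x => x * exp (κ * x)) (by fun_prop)

end vonMises

theorem orderParam_eq (n : ℕ) (κ : ℝ) :
    orderParam n κ = vonMisesMoment (n - 2) κ / vonMisesMass (n - 2) κ := rfl

section orderParam

variable (n : ℕ)

theorem continuous_orderParam : Continuous (orderParam n) :=
  (continuous_vonMisesMoment _).div (continuous_vonMisesMass _) fun κ =>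
    (vonMisesMass_pos _ κ).ne'

theorem orderParam_pos {κ : ℝ} (hκ : 0 < κ) : 0 < orderParam n κ := by
  have hsq : 0 < zonalIntegral (n - 2) (fun x => x ^ 2) := by
    rw [zonalIntegral.sq]; exact div_pos (zonalIntegral.one_pos _) (by positivity)
  exact div_pos ((mul_pos hκ hsq).trans_le (mul_zonalIntegral_sq_le_vonMisesMoment _ hκ.le))
    (vonMisesMass_pos _ κ)

theorem orderParam_le_one (κ : ℝ) : orderParam n κ ≤ 1 :=
  div_le_one_of_le₀ (vonMisesMoment_le_vonMisesMass _ κ) (vonMisesMass_pos _ κ).le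

variable {n}

theorem zonalIntegral_sq_of_two_le (hn : 2 ≤ n) :
    zonalIntegral (n - 2) (fun x => x ^ 2) = zonalIntegral (n - 2) (fun _ => 1) / n := by
  rw [zonalIntegral.sq, Nat.cast_sub hn]
  push_cast
  ring_nf

theorem orderParam_le_mul_exp_div (hn : 2 ≤ n) {κ : ℝ} (hκ : 0 ≤ κ) :
    orderParam n κ ≤ κ * exp κ / n := by
  have hN := vonMisesMoment_le (n - 2) hκ
  rw [zonalIntegral_sq_of_two_le hn] at hN
  rw [orderParam_eq, div_le_iff₀ (vonMisesMass_pos _ κ)]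
  calc vonMisesMoment (n - 2) κ ≤ κ * exp κ / n * zonalIntegral (n - 2) (fun _ => 1) :=
        hN.trans_eq (by ring)
    _ ≤ κ * exp κ / n * vonMisesMass (n - 2) κ :=
        mul_le_mul_of_nonneg_left (zonalIntegral_one_le_vonMisesMass _ κ) (by positivity)

theorem div_add_sq_le_orderParam (hn : 2 ≤ n) {κ : ℝ} (hκ : 0 ≤ κ) :
    κ / (n + κ ^ 2) ≤ orderParam n κ := by
  have hn₀ : (0 : ℝ) < n := by positivity
  have hN := mul_zonalIntegral_sq_le_vonMisesMoment (n - 2) hκ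
  rw [zonalIntegral_sq_of_two_le hn, mul_div_assoc', div_le_iff₀ hn₀] at hN
  have hD := vonMisesMass_le (n - 2) κ
  rw [orderParam_eq, div_le_div_iff₀ (by positivity) (vonMisesMass_pos _ κ)]
  nlinarith

end orderParam

theorem continuous_σ₀ : Continuous σ₀ := by
  unfold σ₀
  fun_prop

theorem div_one_add_le_σ₀ {κ : ℝ} (hκ : 0 ≤ κ) : κ / (1 + κ) ≤ σ₀ κ := by
  have hs : (1 + 3 * κ) / (1 + κ) ≤ √(1 + 4 * κ) := by
    refine (le_sqrt' (by positivity)).2 ?_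
    rw [div_pow, div_le_iff₀ (by positivity)]
    nlinarith [pow_nonneg hκ 3]
  unfold σ₀
  rw [le_div_iff₀ two_pos]
  calc κ / (1 + κ) * 2 = (1 + 3 * κ) / (1 + κ) - 1 := by field_simp; ring
    _ ≤ √(1 + 4 * κ) - 1 := by linarith

theorem σ₀_pos {κ : ℝ} (hκ : 0 < κ) : 0 < σ₀ κ :=
  (div_pos hκ (by linarith)).trans_le (div_one_add_le_σ₀ hκ.le)

theorem σ₀_three_quarters : σ₀ (3 / 4) = 1 / 2 := by
  rw [σ₀, show (1 : ℝ) + 4 * (3 / 4) = 2 ^ 2 by norm_num, sqrt_sq zero_le_two]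
  norm_num

theorem tendsto_σ₀_atTop : Tendsto σ₀ atTop atTop := by
  unfold σ₀
  refine Tendsto.atTop_div_const two_pos (tendsto_atTop_add_const_right _ _ ?_)
  exact tendsto_sqrt_atTop.comp
    (tendsto_atTop_add_const_left _ _ (tendsto_id.const_mul_atTop four_pos))

section Ioi

variable {F : ℝ → ℝ} {a x₀ : ℝ}

theorem ContinuousOn.exists_isMinOn_Ioi (hF : ContinuousOn F (Ioi a)) (hx₀ : a < x₀)
    (h_left : ∀ᶠ x in 𝓝[>] a, F x₀ ≤ F x) (h_right : ∀ᶠ x in atTop, F x₀ ≤ F x) :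
    ∃ x ∈ Ioi a, IsMinOn F (Ioi a) x := by
  obtain ⟨u, hu, hleft⟩ := mem_nhdsGT_iff_exists_Ioo_subset.1 h_left
  obtain ⟨R, hright⟩ := eventually_atTop.1 h_right
  obtain ⟨b, hab, hb⟩ := exists_between (lt_min hu hx₀)
  have hK : Icc b (max R x₀) ⊆ Ioi a := fun x hx => hab.trans_le hx.1
  have hx₀K : x₀ ∈ Icc b (max R x₀) := ⟨hb.le.trans (min_le_right _ _), le_max_right _ _⟩
  obtain ⟨x, hxK, hmin⟩ := isCompact_Icc.exists_isMinOn ⟨x₀, hx₀K⟩ (hF.mono hK)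
  refine ⟨x, hK hxK, fun y hy => ?_⟩
  have hx_le : F x ≤ F x₀ := hmin hx₀K
  rcases lt_or_ge y b with hyb | hyb
  · exact hx_le.trans (hleft ⟨hy, hyb.trans (hb.trans_le (min_le_left _ _))⟩)
  rcases le_or_gt y (max R x₀) with hyR | hyR
  · exact hmin ⟨hyb, hyR⟩
  · exact hx_le.trans (hright y ((le_max_left _ _).trans hyR.le))

theorem ContinuousOn.exists_preimage_on_each_side_Ioi (hF : ContinuousOn F (Ioi a))
    (hx₀ : a < x₀) {y : ℝ} (hy : F x₀ < y) (h_left : ∀ᶠ x in 𝓝[>] a, y ≤ F x)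
    (h_right : ∀ᶠ x in atTop, y ≤ F x) :
    ∃ x₁ x₂, a < x₁ ∧ x₁ < x₀ ∧ x₀ < x₂ ∧ F x₁ = y ∧ F x₂ = y := by
  obtain ⟨l, hl, hal, hlx₀⟩ := (h_left.and (Ioo_mem_nhdsGT hx₀)).exists
  obtain ⟨r, hr, hx₀r⟩ := (h_right.and (eventually_gt_atTop x₀)).exists
  obtain ⟨x₁, ⟨hlx₁, hx₁x₀⟩, hx₁⟩ := intermediate_value_Ico' hlx₀.le
    (hF.mono fun x hx => hal.trans_le hx.1) ⟨hy, hl⟩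
  obtain ⟨x₂, ⟨hx₀x₂, -⟩, hx₂⟩ := intermediate_value_Ioc hx₀r.le
    (hF.mono fun x hx => hx₀.trans_le hx.1) ⟨hy, hr⟩
  exact ⟨x₁, x₂, hal.trans_le hlx₁, hx₁x₀, hx₀x₂, hx₁, hx₂⟩

end Ioi

section compatibility

variable {κ : ℝ}

theorem continuousOn_σ₀_div_orderParam (n : ℕ) :
    ContinuousOn (fun κ => σ₀ κ / orderParam n κ) (Ioi 0) :=
  continuous_σ₀.continuousOn.div (continuous_orderParam n).continuousOn fun _ hκ =>
    (orderParam_pos n hκ).ne'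

theorem σ₀_div_orderParam_pos (n : ℕ) (hκ : 0 < κ) : 0 < σ₀ κ / orderParam n κ :=
  div_pos (σ₀_pos hκ) (orderParam_pos n hκ)

theorem div_one_add_mul_exp_le_σ₀_div_orderParam {n : ℕ} (hn : 2 ≤ n) (hκ : 0 < κ) :
    n / ((1 + κ) * exp κ) ≤ σ₀ κ / orderParam n κ :=
  calc (n : ℝ) / ((1 + κ) * exp κ) = κ / (1 + κ) / (κ * exp κ / n) := by
        field_simp
    _ ≤ σ₀ κ / orderParam n κ :=
        div_le_div₀ (σ₀_pos hκ).le (div_one_add_le_σ₀ hκ.le) (orderParam_pos n hκ)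
          (orderParam_le_mul_exp_div hn hκ.le)

theorem eventually_lt_σ₀_div_orderParam_nhdsGT {n : ℕ} (hn : 2 ≤ n) {ρ : ℝ} (hρ : ρ < n) :
    ∀ᶠ κ in 𝓝[>] 0, ρ < σ₀ κ / orderParam n κ := by
  have hlim : Tendsto (fun κ : ℝ => n / ((1 + κ) * exp κ)) (𝓝[>] 0) (𝓝 n) := by
    have hden : Tendsto (fun κ : ℝ => (1 + κ) * exp κ) (𝓝 0) (𝓝 1) := by
      simpa using (by fun_prop : Continuous fun κ : ℝ => (1 + κ) * exp κ).tendsto 0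
    have hlim₀ := (tendsto_const_nhds (x := (n : ℝ))).div hden one_ne_zero
    rw [div_one] at hlim₀
    exact hlim₀.mono_left nhdsWithin_le_nhds
  filter_upwards [hlim.eventually_const_lt hρ, self_mem_nhdsWithin] with κ hκ hκ₀
  exact hκ.trans_le (div_one_add_mul_exp_le_σ₀_div_orderParam hn hκ₀)

theorem eventually_lt_σ₀_div_orderParam_atTop (n : ℕ) (ρ : ℝ) :
    ∀ᶠ κ in atTop, ρ < σ₀ κ / orderParam n κ := by
  filter_upwards [tendsto_σ₀_atTop.eventually_gt_atTop ρ, eventually_gt_atTop 0] with κ hρ hκ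
  exact hρ.trans_le (le_div_self (σ₀_pos hκ).le (orderParam_pos n hκ) (orderParam_le_one n κ))

theorem σ₀_div_orderParam_three_quarters_lt {n : ℕ} (hn : 2 ≤ n) :
    σ₀ (3 / 4) / orderParam n (3 / 4) < n := by
  have hn' : (2 : ℝ) ≤ n := by exact_mod_cast hn
  have hc := div_add_sq_le_orderParam hn (by norm_num : (0 : ℝ) ≤ 3 / 4)
  rw [σ₀_three_quarters, div_lt_iff₀ (orderParam_pos n (by norm_num))]
  calc (1 : ℝ) / 2 < n * ((3 / 4) / (n + (3 / 4) ^ 2)) := by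
        rw [mul_div_assoc', lt_div_iff₀ (by positivity)]
        linarith
    _ ≤ n * orderParam n (3 / 4) := by gcongr

end compatibility

/-- The infimum `ρ_* = inf_{κ>0} σ₀(κ)/c(κ)` is attained at some `κ_* > 0` and satisfies
`0 < ρ_* < n`; moreover for every `ρ_* < ρ < n` the compatibility equation
`σ₀(κ) = ρ c(κ)` has at least two distinct positive solutions. -/
theorem hysteresis_two_solutions (n : ℕ) (hn : 2 ≤ n) :
    ∃ κstar : ℝ, 0 < κstar ∧
      σ₀ κstar / orderParam n κstar
        = sInf ((fun κ : ℝ => σ₀ κ / orderParam n κ) '' Set.Ioi 0) ∧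
      0 < sInf ((fun κ : ℝ => σ₀ κ / orderParam n κ) '' Set.Ioi 0) ∧
      sInf ((fun κ : ℝ => σ₀ κ / orderParam n κ) '' Set.Ioi 0) < n ∧
      ∀ ρ : ℝ, sInf ((fun κ : ℝ => σ₀ κ / orderParam n κ) '' Set.Ioi 0) < ρ → ρ < n →
        ∃ κ₁ κ₂ : ℝ, 0 < κ₁ ∧ κ₁ < κ₂ ∧
          σ₀ κ₁ = ρ * orderParam n κ₁ ∧ σ₀ κ₂ = ρ * orderParam n κ₂ := by
  have hcont := continuousOn_σ₀_div_orderParam n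
  have h34 : (3 / 4 : ℝ) ∈ Ioi 0 := by norm_num
  have h34_lt := σ₀_div_orderParam_three_quarters_lt hn
  obtain ⟨κs, hκs, hmin⟩ := hcont.exists_isMinOn_Ioi h34
    ((eventually_lt_σ₀_div_orderParam_nhdsGT hn h34_lt).mono fun _ => le_of_lt)
    ((eventually_lt_σ₀_div_orderParam_atTop n _).mono fun _ => le_of_lt)
  have hsInf : sInf ((fun κ : ℝ => σ₀ κ / orderParam n κ) '' Ioi 0)
      = σ₀ κs / orderParam n κs :=
    IsLeast.csInf_eq ⟨mem_image_of_mem _ hκs, forall_mem_image.2 hmin⟩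
  rw [hsInf]
  refine ⟨κs, hκs, rfl, σ₀_div_orderParam_pos n hκs, (hmin h34).trans_lt h34_lt,
    fun ρ hρ hρn => ?_⟩
  obtain ⟨κ₁, κ₂, hκ₁, hκ₁s, hκs₂, h₁, h₂⟩ := hcont.exists_preimage_on_each_side_Ioi hκs hρ
    ((eventually_lt_σ₀_div_orderParam_nhdsGT hn hρn).mono fun _ => le_of_lt)
    ((eventually_lt_σ₀_div_orderParam_atTop n ρ).mono fun _ => le_of_lt)
  refine ⟨κ₁, κ₂, hκ₁, hκ₁s.trans hκs₂, ?_, ?_⟩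
  · exact (div_eq_iff (orderParam_pos n hκ₁).ne').1 h₁
  · exact (div_eq_iff (orderParam_pos n (hκs.trans hκs₂)).ne').1 h₂
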